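/- arXiv:1406.7365 — 3 statements merged into one kernel-verified Lean document; each statement's English description precedes it below -/
import Mathlib

section
/- Let G be a finite p-group with |Aut_c(G)| = |γ₂(G)|^{d(G)}, and let N be a proper nontrivial normal subgroup of G. Then the quotient group G/N satisfies |Aut_c(G/N)| = |γ₂(G/N)|^{d(G/N)}. -/
/-!
Evaluating a class-preserving automorphism `φ` on a generating set `S` gives an injection
`φ ↦ (s⁻¹ φ(s))ₛ` of `Aut_c(G)` into `γ₂(G)^S`, so Hypothesis A says exactly that this map is a
bijection for a minimal generating set `S`. Every `φ ∈ Aut_c(G)` induces an element of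
`Aut_c(G/N)`, and `γ₂(G/N)` is the image of `γ₂(G)`; hence surjectivity for `S` in `G` gives
surjectivity for the image of `S` in `G/N`, and `|Aut_c(G/N)| ≥ |γ₂(G/N)|^{d(G/N)}` follows,
the reverse inequality holding in every finite group.
-/

/-- The group of class-preserving automorphisms of `G`. -/
def autC (G : Type*) [Group G] : Subgroup (MulAut G) where
  carrier := {φ | ∀ x : G, IsConj x (φ x)}
  one_mem' := fun x => IsConj.refl x
  mul_mem' := fun {a b} ha hb x => (hb x).trans (ha (b x))
  inv_mem' := fun {a} ha x => by
    have h := (ha ((a⁻¹ : MulAut _) x)).symm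
    simpa using h

section Evaluation

variable {G : Type*} [Group G]

open scoped commutatorElement in
lemma inv_mul_apply_mem_commutator (φ : autC G) (x : G) :
    x⁻¹ * (φ : MulAut G) x ∈ commutator G := by
  obtain ⟨c, hc⟩ := isConj_iff.mp (φ.2 x)
  have h : x⁻¹ * (φ : MulAut G) x = ⁅x⁻¹, c⁆ := by rw [← hc]; group
  rw [h, commutator_def]
  exact Subgroup.commutator_mem_commutator (Subgroup.mem_top _) (Subgroup.mem_top _)

noncomputable def autCEval (S : Finset G) (φ : autC G) (s : S) : commutator G :=
  ⟨(s : G)⁻¹ * (φ : MulAut G) s, inv_mul_apply_mem_commutator φ s⟩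

lemma autCEval_injective {S : Finset G} (hS : Subgroup.closure (S : Set G) = ⊤) :
    Function.Injective (autCEval S) := by
  intro φ ψ h
  have hhom : ((φ : MulAut G) : G →* G) = ((ψ : MulAut G) : G →* G) := by
    refine MonoidHom.eq_of_eqOn_dense hS fun s hs => ?_
    simpa using mul_left_cancel (congrArg Subtype.val (congrFun h ⟨s, hs⟩))
  exact Subtype.ext (MulEquiv.ext fun x => DFunLike.congr_fun hhom x)

lemma card_autCEval_codomain (S : Finset G) :
    Nat.card (S → commutator G) = Nat.card (commutator G) ^ S.card := by
  rw [Nat.card_fun, Nat.card_eq_finsetCard]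

variable [Finite G]

lemma card_autC_le : Nat.card (autC G) ≤ Nat.card (commutator G) ^ Group.rank G := by
  obtain ⟨S, hcard, hS⟩ := Group.rank_spec G
  calc Nat.card (autC G) ≤ Nat.card (S → commutator G) :=
        Nat.card_le_card_of_injective _ (autCEval_injective hS)
    _ = Nat.card (commutator G) ^ Group.rank G := by rw [card_autCEval_codomain, hcard]

lemma card_autC_eq_of_autCEval_surjective {S : Finset G}
    (hS : Subgroup.closure (S : Set G) = ⊤) (hsurj : Function.Surjective (autCEval S)) :
    Nat.card (autC G) = Nat.card (commutator G) ^ Group.rank G := by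
  refine le_antisymm card_autC_le ?_
  calc Nat.card (commutator G) ^ Group.rank G
      ≤ Nat.card (commutator G) ^ S.card :=
        Nat.pow_le_pow_right Nat.card_pos (Group.rank_le hS)
    _ = Nat.card (S → commutator G) := (card_autCEval_codomain S).symm
    _ ≤ Nat.card (autC G) := Nat.card_le_card_of_surjective _ hsurj

lemma autCEval_surjective_of_card_eq
    (hA : Nat.card (autC G) = Nat.card (commutator G) ^ Group.rank G) {S : Finset G}
    (hS : Subgroup.closure (S : Set G) = ⊤) (hcard : S.card = Group.rank G) :
    Function.Surjective (autCEval S) :=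
  ((Nat.bijective_iff_injective_and_card _).mpr
    ⟨autCEval_injective hS, by rw [hA, card_autCEval_codomain, hcard]⟩).2

end Evaluation

section Quotient

variable {G : Type*} [Group G] (N : Subgroup G) [N.Normal]

lemma apply_mem_of_mem_autC (φ : autC G) {n : G} (hn : n ∈ N) : (φ : MulAut G) n ∈ N := by
  obtain ⟨c, hc⟩ := isConj_iff.mp (φ.2 n)
  exact hc ▸ Subgroup.Normal.conj_mem ‹_› n hn c

lemma map_eq_self_of_mem_autC (φ : autC G) :
    N.map ((φ : MulAut G) : G →* G) = N := by
  refine le_antisymm (Subgroup.map_le_iff_le_comap.mpr fun n => apply_mem_of_mem_autC N φ)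
    fun n hn => ⟨((φ⁻¹ : autC G) : MulAut G) n, apply_mem_of_mem_autC N φ⁻¹ hn, ?_⟩
  simp

noncomputable def autCQuotient (φ : autC G) : autC (G ⧸ N) :=
  ⟨QuotientGroup.congr N N (φ : MulAut G) (map_eq_self_of_mem_autC N φ), fun q => by
    induction q using QuotientGroup.induction_on with
    | H x =>
      rw [QuotientGroup.congr_mk]
      exact (QuotientGroup.mk' N).map_isConj (φ.2 x)⟩

@[simp]
lemma autCQuotient_apply_mk (φ : autC G) (x : G) :
    (autCQuotient N φ : MulAut (G ⧸ N)) x = ((φ : MulAut G) x : G ⧸ N) :=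
  QuotientGroup.congr_mk N N _ (map_eq_self_of_mem_autC N φ) x

lemma map_commutator_of_surjective {H : Type*} [Group H] {f : G →* H}
    (hf : Function.Surjective f) : (commutator G).map f = commutator H := by
  rw [map_commutator_eq, MonoidHom.range_eq_top.mpr hf, commutator_def]

lemma autCEval_image_mk_surjective [DecidableEq (G ⧸ N)] {S : Finset G}
    (hsurj : Function.Surjective (autCEval S)) :
    Function.Surjective (autCEval (S.image ((↑) : G → G ⧸ N))) := by
  intro t
  have hlift (s : S) : ∃ c : commutator G, ((c : G) : G ⧸ N) =
      t ⟨s, Finset.mem_image_of_mem _ s.2⟩ := by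
    have hmem : (t ⟨s, Finset.mem_image_of_mem _ s.2⟩ : G ⧸ N) ∈
        (commutator G).map (QuotientGroup.mk' N) := by
      rw [map_commutator_of_surjective (QuotientGroup.mk'_surjective N)]
      exact Subtype.property _
    obtain ⟨c, hc, hc'⟩ := hmem
    exact ⟨⟨c, hc⟩, hc'⟩
  choose c hc using hlift
  obtain ⟨φ, hφ⟩ := hsurj c
  refine ⟨autCQuotient N φ, funext fun ⟨q, hq⟩ => Subtype.ext ?_⟩
  obtain ⟨s, hs, rfl⟩ := Finset.mem_image.mp hq
  have hφs : (s⁻¹ * (φ : MulAut G) s : G) = c ⟨s, hs⟩ :=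
    congrArg Subtype.val (congrFun hφ ⟨s, hs⟩)
  simp only [autCEval, autCQuotient_apply_mk]
  rw [← QuotientGroup.mk_inv, ← QuotientGroup.mk_mul, hφs, hc]

end Quotient

theorem stmt_4_general {G : Type*} [Group G] [Finite G]
    (hA : Nat.card (autC G) = Nat.card (commutator G) ^ Group.rank G)
    (N : Subgroup G) [N.Normal] :
    Nat.card (autC (G ⧸ N)) = Nat.card (commutator (G ⧸ N)) ^ Group.rank (G ⧸ N) := by
  classical
  obtain ⟨S, hcard, hS⟩ := Group.rank_spec G
  refine card_autC_eq_of_autCEval_surjective (S := S.image ((↑) : G → G ⧸ N)) ?_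
    (autCEval_image_mk_surjective N (autCEval_surjective_of_card_eq hA hS hcard))
  have hclosure := MonoidHom.map_closure (QuotientGroup.mk' N) S
  rwa [hS, Subgroup.map_top_of_surjective _ (QuotientGroup.mk'_surjective N), eq_comm,
    ← Finset.coe_image] at hclosure

/-- If a finite p-group `G` satisfies Hypothesis A (`|Aut_c(G)| = |γ₂(G)|^{d(G)}`) and `N`
is a proper nontrivial normal subgroup, then `G/N` also satisfies Hypothesis A. -/
theorem stmt_4 {p : ℕ} {G : Type*} [Group G] [Finite G] (hp : p.Prime) (hpG : IsPGroup p G)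
    (hA : Nat.card (autC G) = Nat.card (commutator G) ^ Group.rank G)
    (N : Subgroup G) [N.Normal] (hbot : N ≠ ⊥) (htop : N ≠ ⊤) :
    Nat.card (autC (G ⧸ N)) = Nat.card (commutator (G ⧸ N)) ^ Group.rank (G ⧸ N) :=
  stmt_4_general hA N
end

section
/- Let G be an arbitrary group such that G/Z(G) is finitely generated, say by cosets x₁Z(G), …, x_dZ(G), with each conjugacy class x_i^G finite. Then G/Z(G) is finite, γ₂(G) is finite, and |G/Z(G)| ≤ |γ₂(G)|^d. -/
/-!
Let `Z = Z(G)`. If `⁅xᵢ, g⁆ = ⁅xᵢ, h⁆` for all `i`, then `h⁻¹g` commutes with every `xᵢ`, hence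
with a generating set of `G/Z` together with `Z`, so `h⁻¹g ∈ Z`. Thus `gZ ↦ (⁅xᵢ, g⁆)ᵢ` embeds
`G/Z` into `∏ᵢ [xᵢ, G] ⊆ γ₂(G)^d`, and `|[xᵢ, G]| = |xᵢ^G|` is finite. Since a commutator depends
only on the cosets of its entries modulo `Z`, a finite `G/Z` leaves only finitely many commutators,
and Schur's theorem makes `γ₂(G)` finite.
-/

open scoped commutatorElement

section

open Subgroup

variable {G : Type*} [Group G]

theorem commutatorElement_mul_left_of_mem_center {a b z : G} (hz : z ∈ center G) :
    ⁅a * z, b⁆ = ⁅a, b⁆ := calc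
  ⁅a * z, b⁆ = a * (z * b * z⁻¹) * a⁻¹ * b⁻¹ := by group
  _ = ⁅a, b⁆ := by
    rw [(show Commute z b from (mem_center_iff.mp hz b).symm).mul_inv_cancel, commutatorElement_def]

theorem commutatorElement_mul_right_of_mem_center {a b z : G} (hz : z ∈ center G) :
    ⁅a, b * z⁆ = ⁅a, b⁆ := by
  rw [← commutatorElement_inv, commutatorElement_mul_left_of_mem_center hz, commutatorElement_inv]

theorem commutatorElement_out_mk_out_mk (a b : G) :
    ⁅(a : G ⧸ center G).out, (b : G ⧸ center G).out⁆ = ⁅a, b⁆ := by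
  obtain ⟨z, hz⟩ := QuotientGroup.mk_out_eq_mul (center G) a
  obtain ⟨w, hw⟩ := QuotientGroup.mk_out_eq_mul (center G) b
  rw [hz, hw, commutatorElement_mul_left_of_mem_center z.2,
    commutatorElement_mul_right_of_mem_center w.2]

theorem finite_commutatorSet_of_finite_quotient_center [Finite (G ⧸ center G)] :
    Finite (commutatorSet G) := by
  refine Set.Finite.to_subtype <| (Set.finite_range
    fun p : (G ⧸ center G) × (G ⧸ center G) => ⁅p.1.out, p.2.out⁆).subset ?_
  rintro _ ⟨a, b, rfl⟩
  exact ⟨(a, b), commutatorElement_out_mk_out_mk a b⟩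

theorem commute_inv_mul_of_commutatorElement_eq {x g h : G} (e : ⁅x, g⁆ = ⁅x, h⁆) :
    Commute x (h⁻¹ * g) := by
  rw [commutatorElement_def, commutatorElement_def, mul_assoc, mul_assoc, mul_assoc, mul_assoc,
    mul_right_inj] at e
  have hconj : h⁻¹ * g * x * g⁻¹ * h = x := by
    simpa [mul_assoc] using congrArg (fun t => h⁻¹ * t⁻¹ * h) e
  rw [Commute, SemiconjBy]
  nth_rewrite 1 [← hconj]
  group

theorem mem_center_of_forall_commute {ι : Type*} {x : ι → G}
    (hgen : closure (Set.range fun i => (x i : G ⧸ center G)) = ⊤) {c : G}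
    (hc : ∀ i, Commute (x i) c) : c ∈ center G := by
  have hmap : (centralizer {c}).map (QuotientGroup.mk' (center G)) = ⊤ := by
    rw [eq_top_iff, ← hgen, closure_le]
    rintro _ ⟨i, rfl⟩
    exact ⟨x i, mem_centralizer_singleton_iff.mpr (hc i).eq, rfl⟩
  have htop : centralizer {c} = ⊤ := by
    rw [← sup_eq_left.mpr (center_le_centralizer {c}), ← QuotientGroup.ker_mk' (center G),
      ← comap_map_eq, hmap, comap_top]
  exact mem_center_iff.mpr fun g => mem_centralizer_singleton_iff.mp (htop ▸ mem_top g)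

theorem injective_commutatorElement_out {ι : Type*} {x : ι → G}
    (hgen : closure (Set.range fun i => (x i : G ⧸ center G)) = ⊤) :
    Function.Injective fun (q : G ⧸ center G) i => ⁅x i, q.out⁆ := by
  intro q q' e
  have hc : q'.out⁻¹ * q.out ∈ center G := mem_center_of_forall_commute hgen fun i =>
    commute_inv_mul_of_commutatorElement_eq (congrFun e i)
  rw [← QuotientGroup.out_eq' q, ← QuotientGroup.out_eq' q']
  exact (QuotientGroup.eq.mpr hc).symm

theorem finite_range_commutatorElement_left {x : G} (h : {y | IsConj x y}.Finite) :
    (Set.range fun g : G => ⁅x, g⁆).Finite := by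
  refine (h.image fun y => x * y⁻¹).subset ?_
  rintro _ ⟨g, rfl⟩
  exact ⟨g * x * g⁻¹, isConj_iff.mpr ⟨g, rfl⟩, by simp [commutatorElement_def, mul_assoc]⟩

theorem finite_quotient_center_of_finite_isConj {ι : Type*} [Finite ι] {x : ι → G}
    (hgen : closure (Set.range fun i => (x i : G ⧸ center G)) = ⊤)
    (hfin : ∀ i, {y | IsConj (x i) y}.Finite) : Finite (G ⧸ center G) := by
  refine (Set.finite_range_iff (injective_commutatorElement_out hgen)).mp <|
    (Set.Finite.pi' fun i => finite_range_commutatorElement_left (hfin i)).subset ?_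
  rintro _ ⟨q, rfl⟩ i
  exact ⟨q.out, rfl⟩

theorem card_quotient_center_le_card_commutator_pow {ι : Type*} [Finite ι]
    [Finite (commutator G)] {x : ι → G}
    (hgen : closure (Set.range fun i => (x i : G ⧸ center G)) = ⊤) :
    Nat.card (G ⧸ center G) ≤ Nat.card (commutator G) ^ Nat.card ι := by
  rw [← Nat.card_fun]
  exact Nat.card_le_card_of_injective
    (fun q i => ⟨⁅x i, q.out⁆, commutator_mem_commutator (mem_top _) (mem_top _)⟩)
    fun q q' e => injective_commutatorElement_out hgen
      (funext fun i => congrArg Subtype.val (congrFun e i))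

end

/-- If `G` is an arbitrary group such that `G/Z(G)` is generated by cosets
`x₁Z(G), …, x_dZ(G)` with each conjugacy class `x_i^G` finite, then `G/Z(G)` is finite,
`γ₂(G)` is finite, and `|G/Z(G)| ≤ |γ₂(G)|^d`. -/
theorem stmt_18 {G : Type*} [Group G] (d : ℕ) (x : Fin d → G)
    (hgen : Subgroup.closure
        (Set.range fun i => ((x i : G) : G ⧸ Subgroup.center G)) = ⊤)
    (hfin : ∀ i, {y : G | IsConj (x i) y}.Finite) :
    Finite (G ⧸ Subgroup.center G) ∧ Finite (commutator G) ∧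
      Nat.card (G ⧸ Subgroup.center G) ≤ Nat.card (commutator G) ^ d := by
  have hQ := finite_quotient_center_of_finite_isConj hgen hfin
  have hC := finite_commutatorSet_of_finite_quotient_center (G := G)
  -- `Finite (commutator G)` is Schur's theorem, a Mathlib instance given `hC`
  refine ⟨hQ, inferInstance, ?_⟩
  simpa using card_quotient_center_le_card_commutator_pow hgen
end

section
/- Let G be a finite p-group of nilpotency class 2 with cyclic commutator subgroup γ₂(G). Then every class-preserving automorphism of G is inner, and |Inn(G)| = |G/Z(G)| equals |Hom(G/Z(G), γ₂(G))| whenever additionally Z(G) = γ₂(G) and G/Z(G) is homocyclic of exponent equal to that of γ₂(G). -/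
open Subgroup

theorem Subgroup.mem_zpowers_iff_coe_mem_zpowers {G : Type*} [Group G] {H : Subgroup G}
    {a b : H} : a ∈ zpowers b ↔ (a : G) ∈ zpowers (b : G) := by
  rw [← mem_map_iff_mem H.subtype_injective, MonoidHom.map_zpowers, coe_subtype]

open scoped IsMulCommutative in
theorem IsCyclic.mem_zpowers_of_orderOf_dvd {K : Type*} [Group K] [Finite K] [IsCyclic K]
    {a b : K} (h : orderOf a ∣ orderOf b) : a ∈ zpowers b := by
  have hle : zpowers b ≤ (powMonoidHom (orderOf b) : K →* K).ker :=
    zpowers_le.mpr (pow_orderOf_eq_one b)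
  have hcard : Nat.card (powMonoidHom (orderOf b) : K →* K).ker ≤ Nat.card (zpowers b) := by
    rw [IsCyclic.card_powMonoidHom_ker, Nat.card_zpowers,
      Nat.gcd_eq_right (orderOf_dvd_natCard b)]
  rw [eq_of_le_of_card_ge hle hcard]
  exact orderOf_dvd_iff_pow_eq_one.mp h

theorem IsPGroup.mem_zpowers_or_mem_zpowers {p : ℕ} [Fact p.Prime] {K : Type*} [Group K]
    [Finite K] [IsCyclic K] (hK : IsPGroup p K) (a b : K) :
    a ∈ zpowers b ∨ b ∈ zpowers a := by
  obtain ⟨i, hi⟩ := IsPGroup.iff_orderOf.mp hK a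
  obtain ⟨j, hj⟩ := IsPGroup.iff_orderOf.mp hK b
  rcases le_total i j with hij | hji
  · exact .inl (IsCyclic.mem_zpowers_of_orderOf_dvd (hi ▸ hj ▸ pow_dvd_pow p hij))
  · exact .inr (IsCyclic.mem_zpowers_of_orderOf_dvd (hi ▸ hj ▸ pow_dvd_pow p hji))

theorem Subgroup.exists_forall_mem_zpowers {C ι : Type*} [Group C] [Finite C] [Finite ι]
    [Nonempty ι] (g : ι → C) (hchain : ∀ i j, g i ∈ zpowers (g j) ∨ g j ∈ zpowers (g i)) :
    ∃ i, ∀ j, g j ∈ zpowers (g i) := by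
  obtain ⟨i, hi⟩ := Finite.exists_max fun i => Nat.card (zpowers (g i))
  refine ⟨i, fun j => (hchain j i).elim id fun hij => ?_⟩
  rw [eq_of_le_of_card_ge (zpowers_le.mpr hij) (hi j)]
  exact mem_zpowers _

section AlternatingPairing

variable {V C : Type*} [Group V] [CommGroup C] {B : V →* V →* C}

theorem apply_swap_eq_inv (hB : ∀ x, B x x = 1) (x y : V) : B y x = (B x y)⁻¹ := by
  have h := hB (x * y)
  simp only [map_mul, MonoidHom.mul_apply, hB, one_mul, mul_one] at h
  exact eq_inv_of_mul_eq_one_left h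

theorem apply_zpow_mul_zpow_mul_left {x y w' : V} (hx : B x w' = 1) (hy : B y w' = 1)
    (a b : ℤ) (w : V) : B (x ^ a * y ^ b * w) w' = B w w' := by
  simp [hx, hy]

theorem exists_eq_zpow_mul_zpow_mul (hB : ∀ x, B x x = 1) {S : Subgroup V} {x y v : V}
    (hx : x ∈ S) (hy : y ∈ S) (hv : v ∈ S) (hxv : B x v ∈ zpowers (B x y))
    (hyv : B y v ∈ zpowers (B x y)) :
    ∃ a b : ℤ, ∃ w ∈ S ⊓ (B x).ker ⊓ (B y).ker, v = x ^ a * y ^ b * w := by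
  obtain ⟨b, hb⟩ := mem_zpowers_iff.mp hxv
  obtain ⟨c, hc⟩ := mem_zpowers_iff.mp hyv
  refine ⟨-c, b, y ^ (-b) * x ^ c * v, ⟨⟨?_, ?_⟩, ?_⟩, by group⟩
  · exact S.mul_mem (S.mul_mem (S.zpow_mem hy _) (S.zpow_mem hx _)) hv
  · simp [hB, ← hb]
  · simp [hB, apply_swap_eq_inv hB x y, ← hc]

theorem exists_mem_apply_eq_and_apply_eq (hB : ∀ x, B x x = 1) {S : Subgroup V} {x y : V}
    (hx : x ∈ S) (hy : y ∈ S) {c d : C} (hc : c ∈ zpowers (B x y)) (hd : d ∈ zpowers (B x y)) :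
    ∃ u ∈ S, B x u = c ∧ B y u = d := by
  obtain ⟨s, rfl⟩ := mem_zpowers_iff.mp hc
  obtain ⟨t, rfl⟩ := mem_zpowers_iff.mp hd
  refine ⟨y ^ s * x ^ (-t), S.mul_mem (S.zpow_mem hy _) (S.zpow_mem hx _), ?_, ?_⟩
  · simp [hB]
  · simp [hB, apply_swap_eq_inv hB x y]

theorem exists_mem_inf_ker_inf_ker_apply_eq (hB : ∀ x, B x x = 1) {S : Subgroup V} {x y v u : V}
    (hx : x ∈ S) (hy : y ∈ S) (hgen : ∀ v ∈ S, ∀ u ∈ S, B v u ∈ zpowers (B x y))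
    (hv : v ∈ S ⊓ (B x).ker ⊓ (B y).ker) (hu : u ∈ S) :
    ∃ w ∈ S ⊓ (B x).ker ⊓ (B y).ker, B v u = B v w := by
  obtain ⟨a, b, w, hw, rfl⟩ :=
    exists_eq_zpow_mul_zpow_mul hB hx hy hu (hgen x hx u hu) (hgen y hy u hu)
  refine ⟨w, hw, ?_⟩
  rw [apply_swap_eq_inv hB _ v, apply_zpow_mul_zpow_mul_left hv.1.2 hv.2, ← apply_swap_eq_inv hB]

theorem card_inf_ker_inf_ker_lt [Finite V] (hB : ∀ x, B x x = 1) {S : Subgroup V} {x y : V}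
    (hx : x ∈ S) (hxy : B x y ≠ 1) : Nat.card ↥(S ⊓ (B x).ker ⊓ (B y).ker) < Nat.card S := by
  refine lt_of_not_ge fun hle => hxy ?_
  have hyx : B y x = 1 := (eq_of_le_of_card_ge (inf_le_left.trans inf_le_left) hle ▸ hx).2
  rw [← inv_eq_one, ← apply_swap_eq_inv hB, hyx]

theorem exists_forall_eq_apply_of_forall_exists_eq_apply [Finite V] [Finite C]
    (hB : ∀ x, B x x = 1) (hchain : ∀ x y u v, B x y ∈ zpowers (B u v) ∨ B u v ∈ zpowers (B x y))
    (S : Subgroup V) (f : V →* C) (hf : ∀ v ∈ S, ∃ u ∈ S, f v = B v u) :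
    ∃ w ∈ S, ∀ v ∈ S, f v = B v w := by
  induction hn : Nat.card S using Nat.strong_induction_on generalizing S f with
  | _ n ih =>
  obtain ⟨⟨⟨x, hx⟩, ⟨y, hy⟩⟩, hxy⟩ := exists_forall_mem_zpowers
    (fun q : S × S => B q.1 q.2) fun _ _ => hchain _ _ _ _
  have hgen : ∀ v ∈ S, ∀ u ∈ S, B v u ∈ zpowers (B x y) := fun v hv u hu => hxy ⟨⟨v, hv⟩, ⟨u, hu⟩⟩
  by_cases hg : B x y = 1
  · refine ⟨1, S.one_mem, fun v hv => ?_⟩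
    obtain ⟨u, hu, hfv⟩ := hf v hv
    have h1 := hgen v hv u hu
    rw [hg, zpowers_one_eq_bot, mem_bot] at h1
    rw [hfv, h1, map_one]
  set W := S ⊓ (B x).ker ⊓ (B y).ker
  have hWS : W ≤ S := inf_le_left.trans inf_le_left
  obtain ⟨u, hu, hxu, hyu⟩ := exists_mem_apply_eq_and_apply_eq hB hx hy
    (by obtain ⟨u, hu, h⟩ := hf x hx; exact h ▸ hgen x hx u hu)
    (by obtain ⟨u, hu, h⟩ := hf y hy; exact h ▸ hgen y hy u hu)
  set f' := f / B.flip u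
  have hf'W : ∀ v ∈ W, ∃ w ∈ W, f' v = B v w := by
    intro v hv
    obtain ⟨u', hu', hfv⟩ := hf v (hWS hv)
    obtain ⟨w, hw, hvw⟩ := exists_mem_inf_ker_inf_ker_apply_eq hB hx hy hgen hv
      (S.mul_mem hu' (S.inv_mem hu))
    exact ⟨w, hw, by simp [f', hfv, ← hvw, div_eq_mul_inv]⟩
  obtain ⟨w', hw', hf'w'⟩ := ih _ (hn ▸ card_inf_ker_inf_ker_lt hB hx hg) W f' hf'W rfl
  refine ⟨u * w', S.mul_mem hu (hWS hw'), fun v hv => ?_⟩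
  obtain ⟨a, b, w, hw, rfl⟩ :=
    exists_eq_zpow_mul_zpow_mul hB hx hy hv (hgen x hx _ hv) (hgen y hy _ hv)
  obtain ⟨⟨-, hxw'⟩, hyw'⟩ := hw'
  have hf'x : f' x = 1 := by simp [f', hxu]
  have hf'y : f' y = 1 := by simp [f', hyu]
  calc f (x ^ a * y ^ b * w) = f' (x ^ a * y ^ b * w) * B (x ^ a * y ^ b * w) u := by simp [f']
    _ = B w w' * B (x ^ a * y ^ b * w) u := by simp [hf'x, hf'y, hf'w' w hw]
    _ = B (x ^ a * y ^ b * w) (u * w') := by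
      rw [← apply_zpow_mul_zpow_mul_left hxw' hyw' a b, mul_comm, ← map_mul]

end AlternatingPairing

open scoped commutatorElement IsMulCommutative

section ClassTwo

variable {G : Type*} [Group G]

theorem commutator_le_center_of_lowerCentralSeries_two_eq_bot
    (h : (⊤ : Subgroup G).lowerCentralSeries 2 = ⊥) : commutator G ≤ center G := by
  have h' : ⁅commutator G, (⊤ : Subgroup G)⁆ = ⊥ := h
  rwa [commutator_eq_bot_iff_le_centralizer, coe_top, centralizer_univ] at h'

theorem commutatorElement_mem_commutator (x y : G) : ⁅x, y⁆ ∈ commutator G :=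
  commutator_mem_commutator (mem_top x) (mem_top y)

theorem commutatorElement_mul_right_of_le_center (hG : commutator G ≤ center G) (x y z : G) :
    ⁅x, y * z⁆ = ⁅x, y⁆ * ⁅x, z⁆ := by
  rw [commutatorElement_mul_right_eq_mul_conj, mul_assoc _ y,
    mem_center_iff.mp (hG (commutatorElement_mem_commutator x z)) y, ← mul_assoc,
    mul_inv_cancel_right]

theorem commutatorElement_mul_left_of_le_center (hG : commutator G ≤ center G) (x y z : G) :
    ⁅x * y, z⁆ = ⁅x, z⁆ * ⁅y, z⁆ := by
  rw [commutatorElement_mul_left_eq_conj_mul,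
    mem_center_iff.mp (hG (commutatorElement_mem_commutator y z)) x, mul_inv_cancel_right,
    mem_center_iff.mp (hG (commutatorElement_mem_commutator x z))]

def commutatorPairing (hG : commutator G ≤ center G) : G →* G →* center G :=
  MonoidHom.mk'
    (fun x => MonoidHom.mk' (fun y => ⟨⁅x, y⁆, hG (commutatorElement_mem_commutator x y)⟩)
      fun y z => Subtype.ext (commutatorElement_mul_right_of_le_center hG x y z))
    fun x y => MonoidHom.ext fun z => Subtype.ext (commutatorElement_mul_left_of_le_center hG x y z)

@[simp]
theorem coe_commutatorPairing_apply (hG : commutator G ≤ center G) (x y : G) :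
    (commutatorPairing hG x y : G) = ⁅x, y⁆ := rfl

theorem mul_commutatorElement_inv_left (x c : G) : x * ⁅x⁻¹, c⁆ = c * x * c⁻¹ := by
  simp [commutatorElement_def, mul_assoc]

theorem commutatorPairing_mem_zpowers_or_mem_zpowers {p : ℕ} [Fact p.Prime] [Finite G]
    [IsCyclic (commutator G)] (hp : IsPGroup p (commutator G)) (hG : commutator G ≤ center G)
    (x y u v : G) :
    commutatorPairing hG x y ∈ zpowers (commutatorPairing hG u v) ∨
      commutatorPairing hG u v ∈ zpowers (commutatorPairing hG x y) := by
  simp only [mem_zpowers_iff_coe_mem_zpowers, coe_commutatorPairing_apply]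
  simpa only [mem_zpowers_iff_coe_mem_zpowers] using hp.mem_zpowers_or_mem_zpowers
    ⟨_, commutatorElement_mem_commutator x y⟩ ⟨_, commutatorElement_mem_commutator u v⟩

theorem range_conj_le_autC : (MulAut.conj : G →* MulAut G).range ≤ autC G := by
  rintro _ ⟨g, rfl⟩ x
  exact isConj_iff.mpr ⟨g, rfl⟩

theorem autC_le_range_conj [Finite G] (hG : commutator G ≤ center G)
    (hchain : ∀ x y u v : G, commutatorPairing hG x y ∈ zpowers (commutatorPairing hG u v) ∨
      commutatorPairing hG u v ∈ zpowers (commutatorPairing hG x y)) :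
    autC G ≤ (MulAut.conj : G →* MulAut G).range := by
  intro φ hφ
  set B := commutatorPairing hG
  have hconj : ∀ x, ∃ c, x⁻¹ * φ x = ⁅x⁻¹, c⁆ := fun x => by
    obtain ⟨c, hc⟩ := isConj_iff.mp (hφ x)
    exact ⟨c, by rw [← hc, ← mul_commutatorElement_inv_left, inv_mul_cancel_left]⟩
  have hcen : ∀ x, x⁻¹ * φ x ∈ center G := fun x => by
    obtain ⟨c, hc⟩ := hconj x
    exact hc ▸ hG (commutatorElement_mem_commutator _ _)
  let f : G →* center G := MonoidHom.mk' (fun x => ⟨x⁻¹ * φ x, hcen x⟩) fun x y => by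
    ext
    simp only [map_mul, mul_inv_rev, coe_mul]
    rw [← mul_assoc, mul_assoc y⁻¹, mem_center_iff.mp (hcen x) y⁻¹]
    group
  have hf : ∀ v ∈ (⊤ : Subgroup G), ∃ u ∈ (⊤ : Subgroup G), f v = B v u := fun v _ => by
    obtain ⟨c, hc⟩ := hconj v
    refine ⟨c⁻¹, mem_top _, Subtype.ext ?_⟩
    change v⁻¹ * φ v = (B v c⁻¹ : G)
    rw [hc, map_inv, ← MonoidHom.inv_apply, ← map_inv]
    rfl
  obtain ⟨w, -, hw⟩ := exists_forall_eq_apply_of_forall_exists_eq_apply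
    (fun x => Subtype.ext (commutatorElement_self x)) hchain ⊤ f hf
  refine ⟨w⁻¹, MulEquiv.ext fun x => ?_⟩
  have hx : x⁻¹ * φ x = ⁅x⁻¹, w⁻¹⁆ := by
    change _ = (B x⁻¹ w⁻¹ : G)
    rw [map_inv, map_inv, MonoidHom.inv_apply, inv_inv]
    exact congrArg Subtype.val (hw x (mem_top x))
  rw [MulAut.conj_apply, ← mul_commutatorElement_inv_left, ← hx, mul_inv_cancel_left]

end ClassTwo

theorem card_addMonoidHom_pi_zmod {A : Type*} [AddCommGroup A] {n : ℕ} [Module (ZMod n) A]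
    (ι : Type*) [Fintype ι] [DecidableEq ι] :
    Nat.card ((ι → ZMod n) →+ A) = Nat.card A ^ Fintype.card ι := by
  rw [← Nat.card_eq_fintype_card, ← Nat.card_fun,
    Nat.card_congr (AddMonoidHom.toZModLinearMapEquiv n).toEquiv]
  exact Nat.card_congr (LinearEquiv.piRing (ZMod n) A ι ℕ).toEquiv

theorem card_monoidHom_pi_zmod {C : Type*} [CommGroup C] {n : ℕ}
    (hC : Monoid.exponent C ∣ n) (ι : Type*) [Fintype ι] [DecidableEq ι] :
    Nat.card (Multiplicative (ι → ZMod n) →* C) = Nat.card C ^ Fintype.card ι := by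
  let _ : Module (ZMod n) (Additive C) := AddCommGroup.zmodModule fun x =>
    congrArg Additive.ofMul (orderOf_dvd_iff_pow_eq_one.mp (Monoid.exponent_dvd.mp hC x.toMul))
  rw [← Nat.card_congr AddMonoidHom.toMultiplicativeLeft, card_addMonoidHom_pi_zmod]
  rfl

theorem card_eq_card_monoidHom_of_mulEquiv {C Q : Type*} [Group C] [IsCyclic C] [Finite C] [Group Q]
    {k : ℕ} (ψ : Q ≃* Multiplicative (Fin k → ZMod (Monoid.exponent C))) :
    Nat.card Q = Nat.card (Q →* C) := by
  rw [Nat.card_congr ψ.monoidHomCongrLeftEquiv, card_monoidHom_pi_zmod dvd_rfl,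
    Nat.card_congr ψ.toEquiv]
  simp [IsCyclic.exponent_eq_card]

theorem stmt_19_general {p : ℕ} {G : Type*} [Group G] [Finite G] (hp : p.Prime) (hpG : IsPGroup p G)
    (hcl2' : (⊤ : Subgroup G).lowerCentralSeries 2 = ⊥)
    (hcyc : IsCyclic (commutator G)) :
    autC G = (MulAut.conj : G →* MulAut G).range ∧
      ((Subgroup.center G = commutator G ∧
          ∃ k : ℕ, Nonempty ((G ⧸ Subgroup.center G) ≃*
            Multiplicative (Fin k → ZMod (Monoid.exponent (commutator G))))) →
        Nat.card (G ⧸ Subgroup.center G) =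
          Nat.card ((G ⧸ Subgroup.center G) →* (commutator G))) := by
  have : Fact p.Prime := ⟨hp⟩
  have hG := commutator_le_center_of_lowerCentralSeries_two_eq_bot hcl2'
  refine ⟨le_antisymm ?_ range_conj_le_autC, ?_⟩
  · exact autC_le_range_conj hG
      (commutatorPairing_mem_zpowers_or_mem_zpowers (hpG.to_subgroup _) hG)
  · rintro ⟨-, k, ⟨ψ⟩⟩
    exact card_eq_card_monoidHom_of_mulEquiv ψ

/-- Let `G` be a finite p-group of nilpotency class 2 with cyclic commutator subgroup.
Then every class-preserving automorphism of `G` is inner, and moreover, whenever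
additionally `Z(G) = γ₂(G)` and `G/Z(G)` is homocyclic of exponent equal to that of
`γ₂(G)`, one has `|Inn(G)| = |G/Z(G)| = |Hom(G/Z(G), γ₂(G))|`. -/
theorem stmt_19 {p : ℕ} {G : Type*} [Group G] [Finite G] (hp : p.Prime) (hpG : IsPGroup p G)
    (hcl2 : (⊤ : Subgroup G).lowerCentralSeries 1 ≠ ⊥) (hcl2' : (⊤ : Subgroup G).lowerCentralSeries 2 = ⊥)
    (hcyc : IsCyclic (commutator G)) :
    autC G = (MulAut.conj : G →* MulAut G).range ∧
      ((Subgroup.center G = commutator G ∧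
          ∃ k : ℕ, Nonempty ((G ⧸ Subgroup.center G) ≃*
            Multiplicative (Fin k → ZMod (Monoid.exponent (commutator G))))) →
        Nat.card (G ⧸ Subgroup.center G) =
          Nat.card ((G ⧸ Subgroup.center G) →* (commutator G))) :=
  stmt_19_general hp hpG hcl2' hcyc
end
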